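/- Let Λ(θ) := Σ_{k=1}^{N−1} π(k)·λ₀(k)·log λ_θ(k) + Σ_{k=2}^{N} π(k)·μ₀(k)·log μ_θ(k) − Σ_{k=1}^{N} π(k)·(λ_θ(k) + μ_θ(k)), where π(k) > 0, λ₀(k) = λ_{θ₀}(k) > 0, μ₀(k) = μ_{θ₀}(k) > 0, and λ_θ(k), μ_θ(k) > 0 for all relevant k. Then Λ(θ) ≤ Λ(θ₀) for every θ, with equality if and only if λ_θ(k) = λ₀(k) for all k = 1,…,N−1 and μ_θ(k) = μ₀(k) for all k = 2,…,N. -/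
import Mathlib


open Finset

/-- Pointwise Gibbs inequality: `x * log y - y ≤ x * log x - x`, with equality iff `y = x`. -/
lemma gibbs_pointwise (x y : ℝ) (hx : 0 < x) (hy : 0 < y) :
    x * Real.log y - y ≤ x * Real.log x - x ∧
    (x * Real.log y - y = x * Real.log x - x ↔ y = x) := by
  have ht : 0 < y / x := div_pos hy hx
  have hx' : x * (y / x - 1) = y - x := by field_simp
  have hle : x * Real.log y - y ≤ x * Real.log x - x := by
    have hlog : Real.log (y / x) ≤ y / x - 1 := Real.log_le_sub_one_of_pos ht
    have h2 := mul_le_mul_of_nonneg_left hlog hx.le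
    rw [Real.log_div hy.ne' hx.ne'] at h2
    nlinarith
  refine ⟨hle, ?_, fun h => by rw [h]⟩
  intro h
  by_contra hne
  have ht1 : y / x ≠ 1 := fun h1 => hne ((div_eq_one_iff_eq hx.ne').mp h1)
  have hlog := Real.log_lt_sub_one_of_pos ht ht1
  have h2 := mul_lt_mul_of_pos_left hlog hx
  rw [Real.log_div hy.ne' hx.ne'] at h2
  nlinarith

/-- The limiting normalized conditional log-likelihood `Λ` of the `Q`-process is
maximized exactly at parameters matching the data-generating intensities. -/
theorem contrast_maximized_at_truth {Θ : Type*} (N : ℕ) (hN : 2 ≤ N)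
    (π : ℕ → ℝ) (lam mu : Θ → ℕ → ℝ) (θ₀ : Θ)
    (hπ : ∀ k ∈ Finset.Icc 1 N, 0 < π k)
    (hlam : ∀ θ : Θ, ∀ k ∈ Finset.Icc 1 (N - 1), 0 < lam θ k)
    (hmu : ∀ θ : Θ, ∀ k ∈ Finset.Icc 2 N, 0 < mu θ k)
    (hlamN : ∀ θ : Θ, lam θ N = 0) (hmu1 : ∀ θ : Θ, mu θ 1 = 0)
    (Λ : Θ → ℝ)
    (hΛ : ∀ θ : Θ, Λ θ =
      (∑ k ∈ Finset.Icc 1 (N - 1), π k * lam θ₀ k * Real.log (lam θ k))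
      + (∑ k ∈ Finset.Icc 2 N, π k * mu θ₀ k * Real.log (mu θ k))
      - (∑ k ∈ Finset.Icc 1 N, π k * (lam θ k + mu θ k))) :
    ∀ θ : Θ, Λ θ ≤ Λ θ₀ ∧
      (Λ θ = Λ θ₀ ↔
        ((∀ k ∈ Finset.Icc 1 (N - 1), lam θ k = lam θ₀ k) ∧
         (∀ k ∈ Finset.Icc 2 N, mu θ k = mu θ₀ k))) := by
  intro θ
  -- positivity of π on the subintervals
  have hπ1 : ∀ k ∈ Finset.Icc 1 (N - 1), 0 < π k := by
    intro k hk
    simp only [Finset.mem_Icc] at hk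
    exact hπ k (Finset.mem_Icc.mpr ⟨hk.1, by omega⟩)
  have hπ2 : ∀ k ∈ Finset.Icc 2 N, 0 < π k := by
    intro k hk
    simp only [Finset.mem_Icc] at hk
    exact hπ k (Finset.mem_Icc.mpr ⟨by omega, hk.2⟩)
  -- representation of Λ as two sums
  have hrep : ∀ τ : Θ, Λ τ =
      (∑ k ∈ Finset.Icc 1 (N - 1), π k * (lam θ₀ k * Real.log (lam τ k) - lam τ k))
      + ∑ k ∈ Finset.Icc 2 N, π k * (mu θ₀ k * Real.log (mu τ k) - mu τ k) := by
    intro τ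
    have h1 : ∑ k ∈ Finset.Icc 1 N, π k * lam τ k
        = ∑ k ∈ Finset.Icc 1 (N - 1), π k * lam τ k := by
      have hNe : N - 1 + 1 = N := by omega
      rw [← hNe, Finset.sum_Icc_succ_top (by omega : 1 ≤ N - 1 + 1), hNe, hlamN τ,
        mul_zero, add_zero]
    have h2 : ∑ k ∈ Finset.Icc 1 N, π k * mu τ k
        = ∑ k ∈ Finset.Icc 2 N, π k * mu τ k := by
      have he : Finset.Icc 1 N = insert 1 (Finset.Icc 2 N) := by
        ext k
        simp only [Finset.mem_Icc, Finset.mem_insert]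
        omega
      rw [he, Finset.sum_insert (by simp), hmu1 τ, mul_zero, zero_add]
    have hsplit : ∑ k ∈ Finset.Icc 1 N, π k * (lam τ k + mu τ k)
        = (∑ k ∈ Finset.Icc 1 (N - 1), π k * lam τ k)
          + ∑ k ∈ Finset.Icc 2 N, π k * mu τ k := by
      rw [← h1, ← h2, ← Finset.sum_add_distrib]
      exact Finset.sum_congr rfl fun k _ => by ring
    rw [hΛ, hsplit]
    simp only [mul_sub, Finset.sum_sub_distrib]
    have : ∀ k, π k * (lam θ₀ k * Real.log (lam τ k)) = π k * lam θ₀ k * Real.log (lam τ k) :=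
      fun k => by ring
    simp only [this]
    have : ∀ k, π k * (mu θ₀ k * Real.log (mu τ k)) = π k * mu θ₀ k * Real.log (mu τ k) :=
      fun k => by ring
    simp only [this]
    ring
  -- termwise inequalities
  have hF : ∀ k ∈ Finset.Icc 1 (N - 1),
      π k * (lam θ₀ k * Real.log (lam θ k) - lam θ k)
        ≤ π k * (lam θ₀ k * Real.log (lam θ₀ k) - lam θ₀ k) ∧
      (π k * (lam θ₀ k * Real.log (lam θ k) - lam θ k)
        = π k * (lam θ₀ k * Real.log (lam θ₀ k) - lam θ₀ k) ↔ lam θ k = lam θ₀ k) := by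
    intro k hk
    obtain ⟨hle, heq⟩ := gibbs_pointwise (lam θ₀ k) (lam θ k) (hlam θ₀ k hk) (hlam θ k hk)
    have hp := hπ1 k hk
    refine ⟨mul_le_mul_of_nonneg_left hle hp.le, ?_, fun h => by rw [h]⟩
    intro h
    exact heq.mp (mul_left_cancel₀ hp.ne' h)
  have hG : ∀ k ∈ Finset.Icc 2 N,
      π k * (mu θ₀ k * Real.log (mu θ k) - mu θ k)
        ≤ π k * (mu θ₀ k * Real.log (mu θ₀ k) - mu θ₀ k) ∧
      (π k * (mu θ₀ k * Real.log (mu θ k) - mu θ k)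
        = π k * (mu θ₀ k * Real.log (mu θ₀ k) - mu θ₀ k) ↔ mu θ k = mu θ₀ k) := by
    intro k hk
    obtain ⟨hle, heq⟩ := gibbs_pointwise (mu θ₀ k) (mu θ k) (hmu θ₀ k hk) (hmu θ k hk)
    have hp := hπ2 k hk
    refine ⟨mul_le_mul_of_nonneg_left hle hp.le, ?_, fun h => by rw [h]⟩
    intro h
    exact heq.mp (mul_left_cancel₀ hp.ne' h)
  -- nonnegativity of the termwise differences
  have hFd : ∀ k ∈ Finset.Icc 1 (N - 1),
      0 ≤ π k * (lam θ₀ k * Real.log (lam θ₀ k) - lam θ₀ k)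
        - π k * (lam θ₀ k * Real.log (lam θ k) - lam θ k) :=
    fun k hk => sub_nonneg.mpr (hF k hk).1
  have hGd : ∀ k ∈ Finset.Icc 2 N,
      0 ≤ π k * (mu θ₀ k * Real.log (mu θ₀ k) - mu θ₀ k)
        - π k * (mu θ₀ k * Real.log (mu θ k) - mu θ k) :=
    fun k hk => sub_nonneg.mpr (hG k hk).1
  have hdiff : Λ θ₀ - Λ θ =
      (∑ k ∈ Finset.Icc 1 (N - 1),
        (π k * (lam θ₀ k * Real.log (lam θ₀ k) - lam θ₀ k)
          - π k * (lam θ₀ k * Real.log (lam θ k) - lam θ k)))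
      + ∑ k ∈ Finset.Icc 2 N,
        (π k * (mu θ₀ k * Real.log (mu θ₀ k) - mu θ₀ k)
          - π k * (mu θ₀ k * Real.log (mu θ k) - mu θ k)) := by
    rw [hrep θ, hrep θ₀, Finset.sum_sub_distrib, Finset.sum_sub_distrib]
    ring
  have hS1 : 0 ≤ ∑ k ∈ Finset.Icc 1 (N - 1),
      (π k * (lam θ₀ k * Real.log (lam θ₀ k) - lam θ₀ k)
        - π k * (lam θ₀ k * Real.log (lam θ k) - lam θ k)) :=
    Finset.sum_nonneg hFd
  have hS2 : 0 ≤ ∑ k ∈ Finset.Icc 2 N,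
      (π k * (mu θ₀ k * Real.log (mu θ₀ k) - mu θ₀ k)
        - π k * (mu θ₀ k * Real.log (mu θ k) - mu θ k)) :=
    Finset.sum_nonneg hGd
  constructor
  · linarith [hdiff, hS1, hS2]
  · constructor
    · intro h
      have h0 : (∑ k ∈ Finset.Icc 1 (N - 1),
          (π k * (lam θ₀ k * Real.log (lam θ₀ k) - lam θ₀ k)
            - π k * (lam θ₀ k * Real.log (lam θ k) - lam θ k)))
          + ∑ k ∈ Finset.Icc 2 N,
            (π k * (mu θ₀ k * Real.log (mu θ₀ k) - mu θ₀ k)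
              - π k * (mu θ₀ k * Real.log (mu θ k) - mu θ k)) = 0 := by
        rw [← hdiff]; linarith
      have hz1 : ∑ k ∈ Finset.Icc 1 (N - 1),
          (π k * (lam θ₀ k * Real.log (lam θ₀ k) - lam θ₀ k)
            - π k * (lam θ₀ k * Real.log (lam θ k) - lam θ k)) = 0 := by linarith
      have hz2 : ∑ k ∈ Finset.Icc 2 N,
          (π k * (mu θ₀ k * Real.log (mu θ₀ k) - mu θ₀ k)
            - π k * (mu θ₀ k * Real.log (mu θ k) - mu θ k)) = 0 := by linarith
      have he1 := (Finset.sum_eq_zero_iff_of_nonneg hFd).mp hz1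
      have he2 := (Finset.sum_eq_zero_iff_of_nonneg hGd).mp hz2
      constructor
      · intro k hk
        have := he1 k hk
        exact (hF k hk).2.mp (by linarith [sub_eq_zero.mp this])
      · intro k hk
        have := he2 k hk
        exact (hG k hk).2.mp (by linarith [sub_eq_zero.mp this])
    · rintro ⟨h1, h2⟩
      rw [hrep θ, hrep θ₀]
      congr 1
      · exact Finset.sum_congr rfl fun k hk => by rw [h1 k hk]
      · exact Finset.sum_congr rfl fun k hk => by rw [h2 k hk]
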